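/- arXiv:2109.11693 — 4 statements merged into one kernel-verified Lean document; each statement's English description precedes it below -/
import Mathlib

section
/- A single Scalable TCP flow (which multiplies its window by 7/8 on loss) achieves full link utilization if B ≥ (1/7)·BDP, and achieves at least 87.5% utilization with zero buffer. -/
section PostLossUtilization

variable {β BDP B W : ℝ}

theorem post_loss_utilization_eq_one (hBDP : 0 < BDP) (hβ : 0 ≤ β)
    (hbuffer : (1 - β) * BDP ≤ β * B) (hW : BDP + B ≤ W) :
    min (β * W / BDP) 1 = 1 := by
  refine min_eq_right ((le_div_iff₀ hBDP).2 ?_)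
  calc 1 * BDP ≤ β * (BDP + B) := by linarith
    _ ≤ β * W := mul_le_mul_of_nonneg_left hW hβ

theorem le_post_loss_utilization (hBDP : 0 < BDP) (hβ : 0 ≤ β) (hβ₁ : β ≤ 1)
    (hW : BDP ≤ W) : β ≤ min (β * W / BDP) 1 := by
  refine le_min ((le_div_iff₀ hBDP).2 ?_) hβ₁
  exact mul_le_mul_of_nonneg_left hW hβ

end PostLossUtilization

theorem scalable_buffer_rule_general
    (BDP B : ℝ) (hBDP : 0 < BDP) :
    (B ≥ (1 / 7) * BDP →
      ∀ Wt : ℝ, Wt ≥ BDP + B → min ((7 / 8) * Wt / BDP) 1 = 1) ∧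
    (B = 0 →
      ∀ Wt : ℝ, Wt ≥ BDP + B → min ((7 / 8) * Wt / BDP) 1 ≥ 7 / 8) := by
  refine ⟨fun hB Wt hWt => ?_, fun hB Wt hWt => ?_⟩
  · exact post_loss_utilization_eq_one hBDP (by norm_num) (by linarith) hWt
  · subst hB
    exact le_post_loss_utilization hBDP (by norm_num) (by norm_num) (by linarith)

/-- Scalable TCP (decrease factor 7/8): full utilization if
`B ≥ (1/7) BDP`, and ≥ 87.5% utilization with zero buffer. -/
theorem scalable_buffer_rule
    (BDP B : ℝ) (hBDP : 0 < BDP) (hB : 0 ≤ B) :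
    (B ≥ (1 / 7) * BDP →
      ∀ Wt : ℝ, Wt ≥ BDP + B → min ((7 / 8) * Wt / BDP) 1 = 1) ∧
    (B = 0 →
      ∀ Wt : ℝ, Wt ≥ BDP + B → min ((7 / 8) * Wt / BDP) 1 ≥ 7 / 8) :=
  scalable_buffer_rule_general BDP B hBDP
end

section
/- Consider n Δ-fair TCP Reno flows (so every window satisfies w_i(t) ≤ Δ⁺·BDP/n) with each w_i(t) ≥ 2, sharing a link where loss happens only when the aggregate window W ≥ BDP + B. If between a loss at time t₁ and time t, the set D of flows that halve their windows satisfies |D| ≤ n²/(Δ⁺·BDP) + √n, while every flow not in D increases its window by 1, then the aggregate window at time t satisfies W(t) ≥ BDP + B − Δ⁺·BDP/√n. -/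
/-!
Relative to `W + n`, each flow of `D` falls short by `w i / 2 + 1 ≤ w i` (as `w i ≥ 2`), so
the total shortfall is at most `∑_{i ∈ D} w i ≤ |D| · Δ⁺·BDP/n`, and the bound on `|D|` makes
this at most `n + Δ⁺·BDP/√n`.
-/

open Finset

section WindowUpdate

variable {ι : Type*} [Fintype ι] [DecidableEq ι] (w : ι → ℝ) (D : Finset ι)

theorem sum_ite_half_add_one_add_sum_half_add_card :
    ∑ i, (if i ∈ D then w i / 2 else w i + 1) + (∑ i ∈ D, w i / 2 + #D) =
      ∑ i, w i + Fintype.card ι := by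
  have hD : ∑ i ∈ D, w i / 2 + #D = ∑ i, if i ∈ D then w i / 2 + 1 else 0 := by
    rw [sum_ite_mem, univ_inter, sum_add_distrib, sum_const, nsmul_one]
  have hcard : (Fintype.card ι : ℝ) = ∑ _i : ι, (1 : ℝ) := by simp
  rw [hD, hcard, ← sum_add_distrib, ← sum_add_distrib]
  refine sum_congr rfl fun i _ => ?_
  split_ifs <;> ring

theorem sum_add_card_sub_card_mul_le_sum_ite_half_add_one (c : ℝ)
    (hlow : ∀ i ∈ D, 2 ≤ w i) (hup : ∀ i ∈ D, w i ≤ c) :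
    ∑ i, w i + Fintype.card ι - #D * c ≤ ∑ i, (if i ∈ D then w i / 2 else w i + 1) := by
  have hsplit := sum_ite_half_add_one_add_sum_half_add_card w D
  have hhalf : ∑ i ∈ D, w i / 2 + #D ≤ ∑ i ∈ D, w i := by
    rw [← nsmul_one, ← sum_const, ← sum_add_distrib]
    exact sum_le_sum fun i hi => by linarith [hlow i hi]
  have hcap : ∑ i ∈ D, w i ≤ #D * c := by
    simpa using sum_le_card_nsmul D w c hup
  linarith

end WindowUpdate

theorem mul_div_le_add_div_sqrt {n P k : ℝ} (hn : 0 < n) (hP : 0 < P)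
    (hk : k ≤ n ^ 2 / P + √n) : k * (P / n) ≤ n + P / √n := by
  calc k * (P / n) ≤ (n ^ 2 / P + √n) * (P / n) := by gcongr
    _ = n + P * (√n / n) := by field_simp
    _ = n + P / √n := by rw [Real.sqrt_div_self, div_eq_mul_inv]

theorem sqrt_n_window_bound_general
    (n : ℕ) (hn : 1 ≤ n) (BDP B Δp : ℝ) (hBDP : 0 < BDP)
    (hΔp : 1 ≤ Δp)
    (w : Fin n → ℝ) (D : Finset (Fin n))
    (hfair : ∀ i, w i ≤ Δp * BDP / n)
    (hlow : ∀ i, 2 ≤ w i)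
    (hagg : ∑ i, w i ≥ BDP + B)
    (hD : (D.card : ℝ) ≤ n ^ 2 / (Δp * BDP) + Real.sqrt n) :
    ∑ i, (if i ∈ D then w i / 2 else w i + 1) ≥
      BDP + B - Δp * BDP / Real.sqrt n := by
  have hn0 : (0 : ℝ) < n := by exact_mod_cast hn
  have hP : 0 < Δp * BDP := by positivity
  have hupdate := sum_add_card_sub_card_mul_le_sum_ite_half_add_one w D (Δp * BDP / n)
    (fun i _ => hlow i) (fun i _ => hfair i)
  have hloss := mul_div_le_add_div_sqrt hn0 hP hD
  rw [Fintype.card_fin] at hupdate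
  linarith

/-- generalized square-root-of-n window bound for Δ-fair TCP Reno
flows. Flows in `D` halve their windows, other flows gain 1 packet. -/
theorem sqrt_n_window_bound
    (n : ℕ) (hn : 1 ≤ n) (BDP B Δp : ℝ) (hBDP : 0 < BDP) (hB : 0 ≤ B)
    (hΔp : 1 ≤ Δp)
    (w : Fin n → ℝ) (D : Finset (Fin n))
    (hfair : ∀ i, w i ≤ Δp * BDP / n)
    (hlow : ∀ i, 2 ≤ w i)
    (hagg : ∑ i, w i ≥ BDP + B)
    (hD : (D.card : ℝ) ≤ n ^ 2 / (Δp * BDP) + Real.sqrt n) :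
    ∑ i, (if i ∈ D then w i / 2 else w i + 1) ≥
      BDP + B - Δp * BDP / Real.sqrt n :=
  sqrt_n_window_bound_general n hn BDP B Δp hBDP hΔp w D hfair hlow hagg hD
end

section
/- Consider n Δ-fair BBR flows in the probe-bandwidth phase, where on a loss at time t₁ each flow i independently changes its in-flight packets by X_i, with X_i = −(1/4)w_i(t₁) with probability 1/8, X_i = +(1/4)w_i(t₁) with probability 1/8, and X_i = 0 with probability 3/4, where w_i(t₁) = R_i(t₁)·RTT ≤ Δ⁺·BDP/n. If B > (Δ⁺·BDP/√(2n))·√(ln(1/δ)) for some δ ∈ (0,1), then with probability at least 1 − δ the aggregate window stays above BDP and the link remains fully utilized. -/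
/-!
Each `-X i` is a mean-zero variable with values in `[-c, c]`, `c = Δ⁺ BDP / (4n)`, so by Hoeffding's
lemma it is sub-Gaussian with variance proxy `c²`. By independence the proxies add up to `n c²`,
and the Chernoff bound gives `P(∑ X i ≤ -B) ≤ exp (-B² / (2 n c²))`. The hypothesis on `B` says
that `B ≥ √(2 n c² ln (1/δ))` (with room to spare: `2 n c² = (Δ⁺ BDP)² / (8n)`), which makes the
exponential at most `δ`.
-/

open MeasureTheory ProbabilityTheory Real

lemma hasSubgaussianMGF_of_abs_le_of_integral_eq_zero {Ω : Type*} [MeasurableSpace Ω]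
    {μ : Measure Ω} [IsProbabilityMeasure μ] {X : Ω → ℝ} {c : ℝ} (hX : AEMeasurable X μ)
    (hb : ∀ ω, |X ω| ≤ c) (hmean : ∫ ω, X ω ∂μ = 0) :
    HasSubgaussianMGF X (‖c‖₊ ^ 2) μ := by
  have h := hasSubgaussianMGF_of_mem_Icc_of_integral_eq_zero hX
    (ae_of_all _ fun ω ↦ abs_le.1 (hb ω)) hmean
  have hc : ‖c - -c‖₊ / 2 = ‖c‖₊ := by
    rw [sub_neg_eq_add, ← two_mul, nnnorm_mul]
    simp
  rwa [hc] at h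

lemma measureReal_sum_le_neg_le_of_iIndepFun {Ω ι : Type*} [MeasurableSpace Ω] [Fintype ι]
    {μ : Measure Ω} [IsProbabilityMeasure μ] {X : ι → Ω → ℝ} {c ε : ℝ}
    (hmeas : ∀ i, Measurable (X i)) (hind : iIndepFun X μ)
    (hmean : ∀ i, ∫ ω, X i ω ∂μ = 0) (hb : ∀ i ω, |X i ω| ≤ c) (hε : 0 ≤ ε) :
    μ.real {ω | ∑ i, X i ω ≤ -ε} ≤ exp (-ε ^ 2 / (2 * (Fintype.card ι * c ^ 2))) := by
  have hsub : ∀ i ∈ Finset.univ, HasSubgaussianMGF (fun ω ↦ -X i ω) (‖c‖₊ ^ 2) μ :=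
    fun i _ ↦ (hasSubgaussianMGF_of_abs_le_of_integral_eq_zero (hmeas i).aemeasurable
      (hb i) (hmean i)).neg
  have hind_neg : iIndepFun (fun i ω ↦ -X i ω) μ :=
    hind.comp (fun _ x ↦ -x) fun _ ↦ measurable_neg
  have h := HasSubgaussianMGF.measure_sum_ge_le_of_iIndepFun hind_neg hsub hε
  have hset : {ω | ∑ i, X i ω ≤ -ε} = {ω | ε ≤ ∑ i, -X i ω} := by
    ext ω
    simp only [Set.mem_ofPred_eq, Finset.sum_neg_distrib, le_neg]
  simpa [hset] using h

lemma exp_neg_sq_div_le_of_sqrt_le {v ε δ : ℝ} (hv : 0 < v) (hδ : 0 < δ)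
    (hε : √(2 * v * log (1 / δ)) ≤ ε) :
    exp (-ε ^ 2 / (2 * v)) ≤ δ := by
  obtain ⟨-, hsq⟩ := Real.sqrt_le_iff.1 hε
  have hlog : log (1 / δ) ≤ ε ^ 2 / (2 * v) := by
    rw [le_div_iff₀ (by positivity)]
    linarith
  rw [one_div, log_inv] at hlog
  rw [← exp_log hδ, exp_le_exp, neg_div]
  linarith

lemma sqrt_two_mul_card_mul_sq_mul_le {n : ℕ} (hn : 1 ≤ n) {a L : ℝ} (ha : 0 ≤ a) :
    √(2 * (n * (a / (4 * n)) ^ 2) * L) ≤ a / √(2 * n) * √L := by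
  have hn0 : (0 : ℝ) < n := by exact_mod_cast hn
  have hroot : √(2 * n) * √(2 * n) = 2 * n := mul_self_sqrt (by positivity)
  have hsq : 2 * (n * (a / (4 * n)) ^ 2) = (√(2 * n) * (a / (4 * n))) ^ 2 := by
    rw [mul_pow, sq (√(2 * n)), hroot]
    ring
  rw [sqrt_mul (by positivity), hsq, sqrt_sq (by positivity)]
  gcongr
  rw [le_div_iff₀ (by positivity), mul_right_comm, hroot]
  field_simp
  linarith

theorem bbr_sqrt_n_rule_general
    {Ω : Type*} [MeasurableSpace Ω] (P : Measure Ω) [IsProbabilityMeasure P]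
    (n : ℕ) (hn : 1 ≤ n) (BDP B Δp δ : ℝ) (hBDP : 0 < BDP) (hΔp : 1 ≤ Δp)
    (hδ0 : 0 < δ)
    (X : Fin n → Ω → ℝ)
    (hmeas : ∀ i, Measurable (X i))
    (hind : iIndepFun X P)
    (hmean : ∀ i, ∫ ω, X i ω ∂P = 0)
    (hbound : ∀ i ω, |X i ω| ≤ Δp * BDP / (4 * n))
    (hB : B > (Δp * BDP / Real.sqrt (2 * n)) * Real.sqrt (Real.log (1 / δ))) :
    P {ω | BDP + B + ∑ i, X i ω < BDP} ≤ ENNReal.ofReal δ := by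
  have ha : 0 < Δp * BDP := by positivity
  have hn0 : (0 : ℝ) < n := by exact_mod_cast hn
  have hv : 0 < (n : ℝ) * (Δp * BDP / (4 * n)) ^ 2 := by positivity
  have hdev : √(2 * (n * (Δp * BDP / (4 * n)) ^ 2) * log (1 / δ)) ≤ B :=
    (sqrt_two_mul_card_mul_sq_mul_le hn ha.le).trans hB.le
  have htail := measureReal_sum_le_neg_le_of_iIndepFun hmeas hind hmean hbound
    ((sqrt_nonneg _).trans hdev)
  rw [Fintype.card_fin] at htail
  calc P {ω | BDP + B + ∑ i, X i ω < BDP}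
      ≤ P {ω | ∑ i, X i ω ≤ -B} := measure_mono fun ω hω ↦ by
        simp only [Set.mem_ofPred_eq] at hω ⊢
        linarith
    _ = ENNReal.ofReal (P.real {ω | ∑ i, X i ω ≤ -B}) := (ofReal_measureReal).symm
    _ ≤ ENNReal.ofReal δ :=
        ENNReal.ofReal_le_ofReal (htail.trans (exp_neg_sq_div_le_of_sqrt_le hv hδ0 hdev))

/-- square-root-of-n rule for BBR. On a loss, each flow changes
its in-flight packets by an independent mean-zero random amount `X i` bounded
by `Δ⁺ BDP/(4n)`. If `B > (Δ⁺ BDP/√(2n)) √(ln(1/δ))`, then with probability at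
least `1 - δ` the aggregate window `BDP + B + ∑ X i` stays at least `BDP`, so
the link remains fully utilized. -/
theorem bbr_sqrt_n_rule
    {Ω : Type*} [MeasurableSpace Ω] (P : Measure Ω) [IsProbabilityMeasure P]
    (n : ℕ) (hn : 1 ≤ n) (BDP B Δp δ : ℝ) (hBDP : 0 < BDP) (hΔp : 1 ≤ Δp)
    (hδ0 : 0 < δ) (hδ1 : δ < 1)
    (X : Fin n → Ω → ℝ)
    (hmeas : ∀ i, Measurable (X i))
    (hind : iIndepFun X P)
    (hmean : ∀ i, ∫ ω, X i ω ∂P = 0)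
    (hbound : ∀ i ω, |X i ω| ≤ Δp * BDP / (4 * n))
    (hB : B > (Δp * BDP / Real.sqrt (2 * n)) * Real.sqrt (Real.log (1 / δ))) :
    P {ω | BDP + B + ∑ i, X i ω < BDP} ≤ ENNReal.ofReal δ :=
  bbr_sqrt_n_rule_general P n hn BDP B Δp δ hBDP hΔp hδ0 X hmeas hind hmean hbound hB
end

section
/- In the generalized model where between times t₁ and t exactly n²/(Δ⁺·BDP) + s flows (for some s ≥ 0) halve their Δ-fair windows while the rest increase by one, the aggregate window satisfies W(t) ≥ BDP + B − s·Δ⁺·BDP/n. Consequently, a buffer of size B ≥ s·Δ⁺·BDP/n suffices for full link utilization. -/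
/-!
Compared with every flow adding one packet, a flow that halves instead loses `w_i / 2 + 1 ≤ w_i ≤ w*`
(using `w_i ≥ 2`). The `n` added packets therefore pay for `n / w*` halving flows, and each of the
`s` extra ones costs at most `w*`, so the aggregate window drops by at most `s w*` below `W(t₁)`.
-/

open Finset

theorem sum_ite_halve_ge {ι : Type*} [Fintype ι] [DecidableEq ι] (w : ι → ℝ) (D : Finset ι)
    (c : ℝ) (hfair : ∀ i ∈ D, w i ≤ c) (hlow : ∀ i ∈ D, 2 ≤ w i) :
    ∑ i, w i + Fintype.card ι - D.card * c ≤ ∑ i, (if i ∈ D then w i / 2 else w i + 1) :=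
  calc ∑ i, w i + Fintype.card ι - D.card * c = ∑ i, (w i + 1 - if i ∈ D then c else 0) := by
        simp [sum_sub_distrib, sum_add_distrib, sum_ite_mem]
    _ ≤ ∑ i, (if i ∈ D then w i / 2 else w i + 1) := sum_le_sum fun i _ => by
        split_ifs with hi
        · linarith [hfair i hi, hlow i hi]
        · simp

theorem mul_le_add_mul_of_le_div_add {k a s c : ℝ} (hc : 0 < c) (h : k ≤ a / c + s) :
    k * c ≤ a + s * c := by
  have := (le_div_iff₀ hc).1 (sub_le_iff_le_add.2 h)
  linarith

theorem desynchronized_flows_window_bound_general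
    (n : ℕ) (hn : 1 ≤ n) (BDP B Δp s : ℝ) (hBDP : 0 < BDP)
    (w : Fin n → ℝ) (D : Finset (Fin n))
    (hfair : ∀ i, w i ≤ Δp * BDP / n)
    (hlow : ∀ i, 2 ≤ w i)
    (hagg : ∑ i, w i ≥ BDP + B)
    (hD : (D.card : ℝ) ≤ (n : ℝ) / (Δp * BDP / n) + s) :
    (∑ i, (if i ∈ D then w i / 2 else w i + 1) ≥
      BDP + B - s * (Δp * BDP / n)) ∧
    (B ≥ s * (Δp * BDP / n) →
      min ((∑ i, (if i ∈ D then w i / 2 else w i + 1)) / BDP) 1 = 1) := by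
  set wstar := Δp * BDP / n
  have hwstar : 0 < wstar := by linarith [hlow ⟨0, hn⟩, hfair ⟨0, hn⟩]
  have hcard := mul_le_add_mul_of_le_div_add hwstar hD
  have hsum := sum_ite_halve_ge w D wstar (fun i _ => hfair i) (fun i _ => hlow i)
  rw [Fintype.card_fin] at hsum
  have hwindow : ∑ i, (if i ∈ D then w i / 2 else w i + 1) ≥ BDP + B - s * wstar := by
    linarith
  refine ⟨hwindow, fun hbuf => min_eq_right ?_⟩
  rw [one_le_div hBDP]
  linarith

/-- if exactly `n/w* + s` flows halve their Δ-fair windows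
(`w* = Δ⁺ BDP/n`) while the rest add one packet, then
`W(t) ≥ BDP + B - s Δ⁺ BDP/n`; hence `B ≥ s Δ⁺ BDP/n` gives full
utilization. -/
theorem desynchronized_flows_window_bound
    (n : ℕ) (hn : 1 ≤ n) (BDP B Δp s : ℝ) (hBDP : 0 < BDP) (hB : 0 ≤ B)
    (hΔp : 1 ≤ Δp) (hs : 0 ≤ s)
    (w : Fin n → ℝ) (D : Finset (Fin n))
    (hfair : ∀ i, w i ≤ Δp * BDP / n)
    (hlow : ∀ i, 2 ≤ w i)
    (hagg : ∑ i, w i ≥ BDP + B)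
    (hD : (D.card : ℝ) ≤ (n : ℝ) / (Δp * BDP / n) + s) :
    (∑ i, (if i ∈ D then w i / 2 else w i + 1) ≥
      BDP + B - s * (Δp * BDP / n)) ∧
    (B ≥ s * (Δp * BDP / n) →
      min ((∑ i, (if i ∈ D then w i / 2 else w i + 1)) / BDP) 1 = 1) :=
  desynchronized_flows_window_bound_general n hn BDP B Δp s hBDP w D hfair hlow hagg hD
end
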